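/- arXiv:2406.02937 — 7 statements merged into one kernel-verified Lean document; each statement's English description precedes it below -/
import Mathlib

section
/- (Generalized Johnson identity.) For all natural numbers p, q, c, d, r with p + q = c + d and r ≤ p, r ≤ q, r ≤ c, r ≤ d, one has F(p)·F(q) − F(c)·F(d) = (−b)^r · ( F(p−r)·F(q−r) − F(c−r)·F(d−r) ). -/
noncomputable def genFib (a b : ℝ) : ℕ → ℝ
  | 0 => 0
  | 1 => 1
  | n + 2 => a * genFib a b (n + 1) + b * genFib a b n

lemma genFib_add (a b : ℝ) : ∀ m n : ℕ, genFib a b (m + n + 1) =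
    genFib a b (m + 1) * genFib a b (n + 1) + b * genFib a b m * genFib a b n
  | 0, n => by simp [genFib]
  | 1, n => by
      rw [show 1 + n + 1 = n + 2 by omega, genFib]
      show _ = genFib a b 2 * _ + _
      rw [show (2:ℕ) = 0 + 2 from rfl, genFib]
      simp [genFib]
  | m + 2, n => by
      have h1 := genFib_add a b (m + 1) n
      have h0 := genFib_add a b m n
      have e1 : m + 2 + n + 1 = (m + n + 1) + 2 := by omega
      have e2 : m + 1 + n + 1 = (m + n + 1) + 1 := by omega
      rw [show m + 1 + 1 = m + 2 from rfl] at h1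
      rw [e1, genFib, ← e2, h1, h0]
      rw [show m + 2 + 1 = (m + 1) + 2 from rfl, genFib, genFib,
        show m + 1 + 1 = m + 2 from rfl, genFib]
      ring

lemma genFib_step (a b : ℝ) (p q c d : ℕ) (h : p + q = c + d) :
    genFib a b (p + 1) * genFib a b (q + 1) - genFib a b (c + 1) * genFib a b (d + 1) =
      -b * (genFib a b p * genFib a b q - genFib a b c * genFib a b d) := by
  have hp := genFib_add a b p q
  have hc := genFib_add a b c d
  rw [h] at hp
  rw [hp] at hc
  linarith [hc]

theorem genFib_johnson (a b : ℝ) (p q c d r : ℕ)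
    (hpq : p + q = c + d) (hrp : r ≤ p) (hrq : r ≤ q) (hrc : r ≤ c) (hrd : r ≤ d) :
    genFib a b p * genFib a b q - genFib a b c * genFib a b d =
      (-b) ^ r * (genFib a b (p - r) * genFib a b (q - r) -
        genFib a b (c - r) * genFib a b (d - r)) := by
  induction r generalizing p q c d with
  | zero => simp
  | succ r ih =>
    obtain ⟨p, rfl⟩ : ∃ p', p = p' + 1 := ⟨p - 1, by omega⟩
    obtain ⟨q, rfl⟩ : ∃ q', q = q' + 1 := ⟨q - 1, by omega⟩
    obtain ⟨c, rfl⟩ : ∃ c', c = c' + 1 := ⟨c - 1, by omega⟩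
    obtain ⟨d, rfl⟩ : ∃ d', d = d' + 1 := ⟨d - 1, by omega⟩
    have h' : p + q = c + d := by omega
    rw [genFib_step a b p q c d h', ih p q c d h' (by omega) (by omega) (by omega) (by omega)]
    have : ∀ x : ℕ, x + 1 - (r + 1) = x - r := fun x => by omega
    rw [this, this, this, this, pow_succ]
    ring
end

section
/- For all natural numbers n, m, j with j ≤ m, F(n+j)·F(m) − F(j)·F(n+m) = (−1)^j · b^j · F(n)·F(m−j). -/
lemma genFib_step_s4 (a b : ℝ) (n : ℕ) :
    genFib a b (n + 2) = a * genFib a b (n + 1) + b * genFib a b n := rfl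

lemma genFib_aux (a b : ℝ) : ∀ j k n : ℕ,
    genFib a b (n + j) * genFib a b (j + k) - genFib a b j * genFib a b (n + j + k) =
      (-1) ^ j * b ^ j * genFib a b n * genFib a b k := by
  intro j
  induction j using Nat.strong_induction_on with
  | _ j ih =>
    match j with
    | 0 => intro k n; simp [genFib]
    | 1 =>
      intro k n
      induction k using Nat.strong_induction_on with
      | _ k ihk =>
        match k with
        | 0 => simp [genFib]
        | 1 =>
          have h2 : genFib a b (n + 2) = a * genFib a b (n + 1) + b * genFib a b n := rfl
          simp [genFib, show n + 1 + 1 = n + 2 from rfl, h2]; ring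
        | k + 2 =>
          have h1 := ihk (k + 1) (by omega)
          have h2 := ihk k (by omega)
          have e1 : (1 : ℕ) + (k + 2) = (1 + k) + 2 := by omega
          have e2 : n + 1 + (k + 2) = (n + 1 + k) + 2 := by omega
          have e3 : n + 1 + (k + 1) = (n + 1 + k) + 1 := by omega
          have e4 : (1 : ℕ) + (k + 1) = (1 + k) + 1 := by omega
          rw [e1, e2, genFib_step_s4 a b (1 + k), genFib_step_s4 a b (n + 1 + k),
            genFib_step_s4 a b k]
          rw [e3, e4] at h1
          linear_combination a * h1 + b * h2
    | j + 2 =>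
      intro k n
      have h1 := ih (j + 1) (by omega) (k + 1) n
      have h2 := ih j (by omega) (k + 2) n
      have e1 : n + (j + 2) = (n + j) + 2 := by omega
      have e2 : n + j + 2 + k = n + j + (k + 2) := by omega
      have e3 : j + 2 + k = j + (k + 2) := by omega
      rw [e1, e2, e3, genFib_step_s4 a b (n + j), genFib_step_s4 a b j]
      have e4 : n + (j + 1) = (n + j) + 1 := by omega
      have e5 : n + j + 1 + (k + 1) = n + j + (k + 2) := by omega
      have e6 : j + 1 + (k + 1) = j + (k + 2) := by omega
      rw [e4, e5, e6] at h1
      rw [genFib_step_s4 a b k] at h2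
      linear_combination a * h1 + b * h2

theorem genFib_prop4 (a b : ℝ) (n m j : ℕ) (hj : j ≤ m) :
    genFib a b (n + j) * genFib a b m - genFib a b j * genFib a b (n + m) =
      (-1) ^ j * b ^ j * genFib a b n * genFib a b (m - j) := by
  obtain ⟨k, rfl⟩ : ∃ k, m = j + k := ⟨m - j, by omega⟩
  have e : j + k - j = k := by omega
  rw [e, show n + (j + k) = n + j + k from by omega]
  exact genFib_aux a b j k n
end

section
/- (Main theorem.) Let r : ℕ → ℝ be any sequence and define p(n) = Σ_{i=0}^{n} r(i)·r(n−i). Then for all natural numbers k, m, n, p(n)·F(k·n + 2m) = Σ_{i=0}^{n} r(i)·L(k·i + m)·r(n−i)·F(k·(n−i) + m). -/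
noncomputable def genLuc (a b : ℝ) : ℕ → ℝ
  | 0 => 2
  | 1 => a
  | n + 2 => a * genLuc a b (n + 1) + b * genLuc a b n

/-!
Since `L x F y + F x L y = 2 F (x + y)`, pairing the `i`-th summand with the `(n - i)`-th one
turns twice the right-hand side into `∑ 2 r i r (n - i) F (k n + 2 m) = 2 p n F (k n + 2 m)`.
-/

theorem Finset.sum_range_succ_reflect_sub {M : Type*} [AddCommMonoid M] (f : ℕ → ℕ → M)
    (n : ℕ) : ∑ i ∈ range (n + 1), f (n - i) i = ∑ i ∈ range (n + 1), f i (n - i) := by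
  rw [← Nat.sum_antidiagonal_eq_sum_range_succ f, ← Nat.sum_antidiagonal_swap]
  exact (Nat.sum_antidiagonal_eq_sum_range_succ (fun i j => f j i) n).symm

theorem Finset.two_mul_sum_range_succ_eq_sum_add_swap {R : Type*} [NonAssocSemiring R]
    (f : ℕ → ℕ → R) (n : ℕ) :
    2 * ∑ i ∈ range (n + 1), f i (n - i) = ∑ i ∈ range (n + 1), (f i (n - i) + f (n - i) i) := by
  rw [two_mul, sum_add_distrib, sum_range_succ_reflect_sub f]

section

variable (a b : ℝ)

theorem genFib_add_two (n : ℕ) :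
    genFib a b (n + 2) = a * genFib a b (n + 1) + b * genFib a b n := rfl

theorem genLuc_add_two (n : ℕ) :
    genLuc a b (n + 2) = a * genLuc a b (n + 1) + b * genLuc a b n := rfl

theorem genLuc_eq_two_mul_genFib_succ_sub (n : ℕ) :
    genLuc a b n = 2 * genFib a b (n + 1) - a * genFib a b n := by
  induction n using Nat.twoStepInduction with
  | zero => simp [genLuc, genFib]
  | one => simp [genLuc, genFib]; ring
  | more n ih₁ ih₂ =>
    rw [genLuc_add_two, ih₁, ih₂, genFib_add_two, genFib_add_two, show n + 1 + 1 = n + 2 from rfl,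
      genFib_add_two]
    ring

theorem genLuc_mul_genFib_add_genFib_mul_genLuc (x y : ℕ) :
    genLuc a b x * genFib a b y + genFib a b x * genLuc a b y = 2 * genFib a b (x + y) := by
  induction x using Nat.twoStepInduction generalizing y with
  | zero => simp [genLuc, genFib]
  | one =>
    rw [genLuc_eq_two_mul_genFib_succ_sub a b y, add_comm 1 y]
    simp [genLuc, genFib]
  | more x ih₁ ih₂ =>
    have h₁ := ih₁ y
    have h₂ := ih₂ y
    rw [show x + 1 + y = x + y + 1 by omega] at h₂
    rw [genLuc_add_two, genFib_add_two, show x + 2 + y = x + y + 2 by omega, genFib_add_two]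
    linear_combination a * h₂ + b * h₁

end

theorem genFib_main_identity (a b : ℝ) (r : ℕ → ℝ)
    (p : ℕ → ℝ) (hp : ∀ n, p n = ∑ i ∈ Finset.range (n + 1), r i * r (n - i))
    (k m n : ℕ) :
    p n * genFib a b (k * n + 2 * m) =
      ∑ i ∈ Finset.range (n + 1),
        r i * genLuc a b (k * i + m) * r (n - i) * genFib a b (k * (n - i) + m) := by
  refine mul_left_cancel₀ (two_ne_zero (α := ℝ)) ?_
  rw [Finset.two_mul_sum_range_succ_eq_sum_add_swap
    (fun i j => r i * genLuc a b (k * i + m) * r j * genFib a b (k * j + m)), hp, Finset.sum_mul,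
    Finset.mul_sum]
  refine Finset.sum_congr rfl fun i hi => ?_
  have hin : i ≤ n := Nat.lt_succ_iff.mp (Finset.mem_range.mp hi)
  have hindex : k * i + m + (k * (n - i) + m) = k * n + 2 * m := by
    rw [← Nat.sub_add_cancel hin, Nat.add_sub_cancel]
    ring
  have hpair := genLuc_mul_genFib_add_genFib_mul_genLuc a b (k * i + m) (k * (n - i) + m)
  rw [hindex] at hpair
  linear_combination r i * r (n - i) * hpair.symm
end

section
/- Let T : ℕ → ℕ → ℝ be any triangular array satisfying the symmetry T(n, i) = T(n, n−i) for all 0 ≤ i ≤ n. Then for all natural numbers k, m, n, F(k·n + 2m) · Σ_{i=0}^{n} T(n, i) = Σ_{i=0}^{n} T(n, i)·F(k·i + m)·L(k·(n−i) + m). -/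
/-! Since `T n` is symmetric, the sum is unchanged when each `F(k i + m) L(k (n - i) + m)` is
replaced by its average with the reflected term `F(k (n - i) + m) L(k i + m)`; and for all `p, q`,
`F(p) L(q) + F(q) L(p) = 2 F(p + q)`, so every such average equals `F(k n + 2 m)`. -/

section Reflection

variable {K : Type*} [Field K] [CharZero K]

theorem Finset.sum_range_mul_eq_mul_sum_of_symm {n : ℕ} (w g : ℕ → K) (c : K)
    (hw : ∀ i ≤ n, w i = w (n - i)) (hg : ∀ i ≤ n, g i + g (n - i) = 2 * c) :
    ∑ i ∈ range (n + 1), w i * g i = c * ∑ i ∈ range (n + 1), w i := by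
  have reflect : ∑ i ∈ range (n + 1), w i * g i = ∑ i ∈ range (n + 1), w i * g (n - i) := by
    rw [← sum_range_reflect]
    refine sum_congr rfl fun i hi => ?_
    have hi : i ≤ n := Nat.lt_succ_iff.mp (mem_range.mp hi)
    rw [Nat.add_sub_cancel, hw i hi]
  have double : 2 * ∑ i ∈ range (n + 1), w i * g i = 2 * (c * ∑ i ∈ range (n + 1), w i) := by
    calc 2 * ∑ i ∈ range (n + 1), w i * g i
        = ∑ i ∈ range (n + 1), w i * (g i + g (n - i)) := by
          rw [two_mul]; nth_rewrite 2 [reflect]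
          simp only [mul_add, sum_add_distrib]
      _ = ∑ i ∈ range (n + 1), w i * (2 * c) :=
          sum_congr rfl fun i hi => by rw [hg i (Nat.lt_succ_iff.mp (mem_range.mp hi))]
      _ = 2 * (c * ∑ i ∈ range (n + 1), w i) := by rw [← sum_mul]; ring
  exact mul_left_cancel₀ two_ne_zero double

end Reflection

section GenFibLuc

variable (a b : ℝ)

@[simp] theorem genFib_zero : genFib a b 0 = 0 := rfl

@[simp] theorem genFib_one : genFib a b 1 = 1 := rfl

@[simp] theorem genLuc_zero : genLuc a b 0 = 2 := rfl

@[simp] theorem genLuc_one : genLuc a b 1 = a := rfl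

theorem genFib_mul_genLuc_add_genFib_mul_genLuc (p q : ℕ) :
    genFib a b p * genLuc a b q + genFib a b q * genLuc a b p = 2 * genFib a b (p + q) := by
  induction q using Nat.twoStepInduction with
  | zero => rw [genLuc_zero, genFib_zero, zero_mul, add_zero, add_zero, mul_comm]
  | one =>
    rw [genLuc_one, genFib_one, one_mul, genLuc_eq_two_mul_genFib_succ_sub, add_comm p]
    ring
  | more q ih₀ ih₁ =>
    rw [genLuc_add_two, genFib_add_two, ← add_assoc, genFib_add_two]
    linear_combination a * ih₁ + b * ih₀

end GenFibLuc

theorem genFib_symm_triangle (a b : ℝ) (T : ℕ → ℕ → ℝ)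
    (hT : ∀ n i, i ≤ n → T n i = T n (n - i)) (k m n : ℕ) :
    genFib a b (k * n + 2 * m) * ∑ i ∈ Finset.range (n + 1), T n i =
      ∑ i ∈ Finset.range (n + 1),
        T n i * genFib a b (k * i + m) * genLuc a b (k * (n - i) + m) := by
  simp_rw [mul_assoc (T n _)]
  refine (Finset.sum_range_mul_eq_mul_sum_of_symm _ _ _ (hT n) fun i hi => ?_).symm
  have hsum : k * i + m + (k * (n - i) + m) = k * n + 2 * m := by
    rw [← Nat.add_sub_cancel' hi, Nat.add_sub_cancel_left, mul_add]; ring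
  rw [Nat.sub_sub_self hi, ← hsum, ← genFib_mul_genLuc_add_genFib_mul_genLuc]
end

section
/- (Multisection of generalized Lucas numbers.) For all natural numbers m ≥ 1 and j with j ≤ m, the following identity of formal power series over ℝ holds: (1 − L(m)·X + (−b)^m·X²) · ( Σ_{n≥0} L(m·n + j)·Xⁿ ) = L(j) − (−b)^j·L(m−j)·X. -/
/-!
Every sequence `s` satisfying the recurrence of `genLuc a b` obeys
`s (n + 2q) = L(q) s (n + q) - (-b)^q s n`, so the multisection `n ↦ L(mn + j)` satisfies a
two-term recurrence with characteristic polynomial `1 - L(m) X + (-b)^m X²`. Multiplying its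
generating function by that polynomial kills all coefficients beyond the first two, which the same
identity (at `q = j`, `n = m - j`) evaluates.
-/

namespace PowerSeries

variable {R : Type*} [CommRing R]

theorem one_sub_C_mul_X_add_C_mul_X_sq_mul_mk {p r : R} {u : ℕ → R}
    (hu : ∀ n, u (n + 2) = p * u (n + 1) - r * u n) :
    (1 - C p * X + C r * X ^ 2) * mk u = C (u 0) + C (u 1 - p * u 0) * X := by
  ext n
  rcases n with _ | _ | n
  · simp
  · simp [sub_mul, add_mul, mul_assoc, coeff_succ_X_mul, coeff_X_pow_mul']
  · simp [sub_mul, add_mul, mul_assoc, coeff_succ_X_mul, coeff_X_pow_mul', hu]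

end PowerSeries

theorem genLuc_add_two_mul {a b : ℝ} {s : ℕ → ℝ}
    (hs : ∀ n, s (n + 2) = a * s (n + 1) + b * s n) (q n : ℕ) :
    s (n + 2 * q) = genLuc a b q * s (n + q) - (-b) ^ q * s n := by
  induction q using Nat.twoStepInduction generalizing n with
  | zero => simp [genLuc]; ring
  | one => simp [genLuc, hs]
  | more q ih ih' =>
    have h := ih (n + 2)
    have h' := ih' (n + 1)
    rw [show n + 2 * (q + 2) = n + 2 * q + 2 + 2 by ring, hs,
      show n + 2 * q + 2 + 1 = n + 1 + 2 * (q + 1) by ring,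
      show n + 2 * q + 2 = n + 2 + 2 * q by ring, h, h', genLuc,
      show n + 1 + (q + 1) = n + 2 + q by ring, show n + (q + 2) = n + 2 + q by ring]
    linear_combination -(-b) ^ q * b * hs n

open PowerSeries in
theorem genLuc_multisection_general (a b : ℝ) (m j : ℕ) (hj : j ≤ m) :
    (1 - C (genLuc a b m) * X + C ((-b) ^ m) * X ^ 2) *
        PowerSeries.mk (fun n => genLuc a b (m * n + j)) =
      C (genLuc a b j) - C ((-b) ^ j * genLuc a b (m - j)) * X := by
  have hL : ∀ n, genLuc a b (n + 2) = a * genLuc a b (n + 1) + b * genLuc a b n := fun _ => rfl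
  have hrec : ∀ n, genLuc a b (m * (n + 2) + j)
      = genLuc a b m * genLuc a b (m * (n + 1) + j) - (-b) ^ m * genLuc a b (m * n + j) := by
    intro n
    have h := genLuc_add_two_mul hL m (m * n + j)
    rwa [show m * n + j + 2 * m = m * (n + 2) + j by ring,
      show m * n + j + m = m * (n + 1) + j by ring] at h
  have hinit : genLuc a b (m * 1 + j) - genLuc a b m * genLuc a b (m * 0 + j)
      = -((-b) ^ j * genLuc a b (m - j)) := by
    have h := genLuc_add_two_mul hL j (m - j)
    rw [show m - j + 2 * j = m * 1 + j by omega, show m - j + j = m by omega] at h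
    rw [mul_zero, zero_add, h]; ring
  rw [one_sub_C_mul_X_add_C_mul_X_sq_mul_mk hrec, hinit, map_neg, neg_mul, ← sub_eq_add_neg]
  simp

open PowerSeries in
theorem genLuc_multisection (a b : ℝ) (m j : ℕ) (hm : 1 ≤ m) (hj : j ≤ m) :
    (1 - C (genLuc a b m) * X + C ((-b) ^ m) * X ^ 2) *
        PowerSeries.mk (fun n => genLuc a b (m * n + j)) =
      C (genLuc a b j) - C ((-b) ^ j * genLuc a b (m - j)) * X :=
  genLuc_multisection_general a b m j hj
end

section
/- The series Σ_{n=1}^{∞} H(n)·Fib(n)/2ⁿ converges and equals (3/√5)·log( (3+√5)/(3−√5) ) + log 4, where Fib(n) is the n-th Fibonacci number and H(n) = Σ_{k=1}^{n} 1/k is the n-th harmonic number. -/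
noncomputable def harmonicR (n : ℕ) : ℝ := ∑ k ∈ Finset.Icc 1 n, (1 : ℝ) / k

/-!
The generating function of the harmonic numbers is `∑ Hₙ xⁿ = -log (1 - x) / (1 - x)` for
`|x| < 1`, the Cauchy product of `∑ xᵏ / k` and the geometric series. Binet's formula splits
`Fₙ / 2ⁿ` into the geometric sequences `(φ/2)ⁿ / √5` and `(ψ/2)ⁿ / √5`, and since
`(3 + √5)(3 - √5) = 4` we have `1 - φ/2 = (3 + √5)⁻¹` and `1 - ψ/2 = (3 - √5)⁻¹`. The sum is
therefore `((3 + √5) log (3 + √5) - (3 - √5) log (3 - √5)) / √5`, which is the stated value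
because `log (3 + √5) + log (3 - √5) = log 4`.
-/

open Real Finset
open scoped goldenRatio

-- The extra `k = 0` term is `1 / 0 = 0`.
lemma harmonicR_eq_sum_range (n : ℕ) : harmonicR n = ∑ k ∈ range (n + 1), (1 : ℝ) / k := by
  rw [range_eq_Ico, sum_eq_sum_Ico_succ_bot n.succ_pos, Nat.succ_eq_add_one,
    Ico_add_one_right_eq_Icc, harmonicR]
  simp

lemma hasSum_pow_div_natCast {x : ℝ} (hx : |x| < 1) :
    HasSum (fun k : ℕ => x ^ k / k) (-log (1 - x)) :=
  (hasSum_nat_add_iff' 1).mp <| by simpa using hasSum_pow_div_log_of_abs_lt_one hx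

lemma summable_norm_pow_div_natCast {x : ℝ} (hx : |x| < 1) :
    Summable fun k : ℕ => ‖x ^ k / k‖ := by
  refine .of_nonneg_of_le (fun _ => norm_nonneg _) (fun k => ?_)
    (summable_geometric_of_lt_one (abs_nonneg x) hx)
  rw [norm_div, norm_pow, Real.norm_eq_abs, Real.norm_natCast]
  rcases k with _ | k
  · simp
  · exact div_le_self (by positivity) (by simp)

lemma hasSum_harmonicR_mul_pow {x : ℝ} (hx : |x| < 1) :
    HasSum (fun n => harmonicR n * x ^ n) (-log (1 - x) / (1 - x)) := by
  have hgeom : Summable fun k : ℕ => ‖x ^ k‖ := by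
    simpa [norm_pow] using summable_geometric_of_lt_one (abs_nonneg x) hx
  have H := hasSum_sum_range_mul_of_summable_norm (summable_norm_pow_div_natCast hx) hgeom
  rw [(hasSum_pow_div_natCast hx).tsum_eq, tsum_geometric_of_abs_lt_one hx, ← div_eq_mul_inv] at H
  refine H.congr_fun fun n => ?_
  rw [harmonicR_eq_sum_range, sum_mul]
  refine sum_congr rfl fun k hk => ?_
  rw [← pow_mul_pow_sub x (Nat.lt_succ_iff.mp (mem_range.mp hk))]
  ring

lemma hasSum_harmonicR_mul_fib_mul_pow {x : ℝ} (hφ : |φ * x| < 1) (hψ : |ψ * x| < 1) :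
    HasSum (fun n => harmonicR n * Nat.fib n * x ^ n)
      ((-log (1 - φ * x) / (1 - φ * x) - -log (1 - ψ * x) / (1 - ψ * x)) / √5) := by
  refine ((hasSum_harmonicR_mul_pow hφ).sub (hasSum_harmonicR_mul_pow hψ)).div_const _
    |>.congr_fun fun n => ?_
  rw [coe_fib_eq, mul_pow, mul_pow]
  ring

theorem harmonic_fib_series :
    HasSum (fun n : ℕ => harmonicR n * (Nat.fib n : ℝ) / 2 ^ n)
      ((3 / Real.sqrt 5) * Real.log ((3 + Real.sqrt 5) / (3 - Real.sqrt 5)) +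
        Real.log 4) := by
  have h5 : √5 ^ 2 = 5 := sq_sqrt (by norm_num)
  have h5_lt : √5 < 3 := by nlinarith [sqrt_nonneg 5]
  have hφ_half : 1 - φ * (1 / 2) = (3 + √5)⁻¹ :=
    (inv_eq_of_mul_eq_one_right (by rw [goldenRatio]; linear_combination (-1 / 4) * h5)).symm
  have hψ_half : 1 - ψ * (1 / 2) = (3 - √5)⁻¹ :=
    (inv_eq_of_mul_eq_one_right (by rw [goldenConj]; linear_combination (-1 / 4) * h5)).symm
  have hsum := hasSum_harmonicR_mul_fib_mul_pow (x := 1 / 2)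
    (by rw [abs_lt]; constructor <;> linarith [goldenRatio_pos, goldenRatio_lt_two])
    (by rw [abs_lt]; constructor <;> linarith [goldenConj_neg, neg_one_lt_goldenConj])
  rw [hφ_half, hψ_half, log_inv, log_inv, neg_neg, neg_neg, div_inv_eq_mul, div_inv_eq_mul] at hsum
  have hprod : log (3 + √5) + log (3 - √5) = log 4 := by
    rw [← log_mul (by positivity) (by linarith)]; congr 1; linear_combination -h5
  convert hsum using 1
  · funext n; rw [one_div_pow, mul_one_div]
  · rw [log_div (by positivity) (by linarith), ← hprod]
    field_simp
    ring
end

section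
/- The series Σ_{n=1}^{∞} Cat(n)·Fib(n)/8ⁿ converges and equals 4·(1 − 3/√10), where Cat(n) is the n-th Catalan number and Fib(n) is the n-th Fibonacci number. -/
/-!
By Binet's formula the series is `(C(φ/8) - C(ψ/8)) / √5`, where `C(x) = ∑ Cat(n) xⁿ` is
the Catalan generating function, convergent for `|x| < 1/4` since `Cat(n) ≤ 4ⁿ`. The Catalan
recurrence gives `C = 1 + x C²` by a Cauchy product, so `(1 - 2x C(x))² = 1 - 4x`. The
function `1 - 2x C(x)` is continuous on `(-1/4, 1/4)`, never vanishes there and equals `1`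
at `0`, hence it is the positive root `√(1 - 4x)`. At `x = φ/8` and `x = ψ/8` these roots
are `-ψ/√2` and `φ/√2`.
-/

open Finset Real goldenRatio

theorem catalan_le_four_pow (n : ℕ) : catalan n ≤ 4 ^ n :=
  calc catalan n ≤ (n + 1) * catalan n := Nat.le_mul_of_pos_left _ n.succ_pos
    _ = n.centralBinom := succ_mul_catalan_eq_centralBinom n
    _ ≤ 4 ^ n := Nat.centralBinom_le_four_pow n

section NormedField

variable {𝕜 : Type*} [NormedField 𝕜]

theorem norm_catalan_mul_pow_le {x : 𝕜} {r : ℝ} (hx : ‖x‖ ≤ r) (n : ℕ) :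
    ‖(catalan n : 𝕜) * x ^ n‖ ≤ (4 * r) ^ n :=
  calc ‖(catalan n : 𝕜) * x ^ n‖ ≤ catalan n * ‖x‖ ^ n := by
        rw [norm_mul, norm_pow]
        gcongr
        simpa using Nat.norm_cast_le (α := 𝕜) (catalan n)
    _ ≤ 4 ^ n * r ^ n := by gcongr; exact_mod_cast catalan_le_four_pow n
    _ = (4 * r) ^ n := (mul_pow _ _ _).symm

theorem summable_norm_catalan_mul_pow {x : 𝕜} (hx : ‖x‖ < 1 / 4) :
    Summable fun n => ‖(catalan n : 𝕜) * x ^ n‖ :=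
  .of_nonneg_of_le (fun _ => norm_nonneg _) (norm_catalan_mul_pow_le le_rfl)
    (summable_geometric_of_lt_one (by positivity) (by linarith))

variable [CompleteSpace 𝕜]

noncomputable def catalanGF (x : 𝕜) : 𝕜 := ∑' n, (catalan n : 𝕜) * x ^ n

theorem hasSum_catalanGF {x : 𝕜} (hx : ‖x‖ < 1 / 4) :
    HasSum (fun n => (catalan n : 𝕜) * x ^ n) (catalanGF x) :=
  (summable_norm_catalan_mul_pow hx).of_norm.hasSum

theorem catalanGF_eq_one_add_mul_sq {x : 𝕜} (hx : ‖x‖ < 1 / 4) :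
    catalanGF x = 1 + x * catalanGF x ^ 2 := by
  have hsum := summable_norm_catalan_mul_pow hx
  have hcauchy : catalanGF x ^ 2 = ∑' n, (catalan (n + 1) : 𝕜) * x ^ n := by
    rw [sq, catalanGF, tsum_mul_tsum_eq_tsum_sum_antidiagonal_of_summable_norm hsum hsum]
    refine tsum_congr fun n => ?_
    rw [catalan_succ', Nat.cast_sum, sum_mul]
    refine sum_congr rfl fun ij hij => ?_
    rw [← mem_antidiagonal.mp hij, Nat.cast_mul, pow_add]
    ring
  have hshift : HasSum (fun n => (catalan (n + 1) : 𝕜) * x ^ (n + 1)) (catalanGF x - 1) := by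
    have h := (hasSum_nat_add_iff' (f := fun n => (catalan n : 𝕜) * x ^ n) 1).mpr
      (hasSum_catalanGF hx)
    rwa [sum_range_one, pow_zero, mul_one, catalan_zero, Nat.cast_one] at h
  calc catalanGF x = 1 + ∑' n, (catalan (n + 1) : 𝕜) * x ^ (n + 1) := by
        rw [hshift.tsum_eq]; ring
    _ = 1 + x * catalanGF x ^ 2 := by
      rw [hcauchy, ← tsum_mul_left]
      exact congrArg _ (tsum_congr fun n => by ring)

theorem continuousOn_catalanGF : ContinuousOn (catalanGF : 𝕜 → 𝕜) (Metric.ball 0 (1 / 4)) := by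
  intro y hy
  obtain ⟨r, hyr, hr⟩ := exists_between (mem_ball_zero_iff.mp hy)
  have hcont : ContinuousOn (catalanGF : 𝕜 → 𝕜) (Metric.closedBall 0 r) :=
    continuousOn_tsum (fun n => by fun_prop)
      (summable_geometric_of_lt_one (by linarith [norm_nonneg y]) (by linarith))
      fun n z hz => norm_catalan_mul_pow_le (mem_closedBall_zero_iff.mp hz) n
  exact (hcont.continuousAt
    (Metric.closedBall_mem_nhds_of_mem (mem_ball_zero_iff.mpr hyr))).continuousWithinAt

end NormedField

theorem one_sub_two_mul_catalanGF {x : ℝ} (hx : |x| < 1 / 4) :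
    1 - 2 * x * catalanGF x = √(1 - 4 * x) := by
  have hball : x ∈ Metric.ball (0 : ℝ) (1 / 4) := by simpa using hx
  refine (convex_ball (0 : ℝ) (1 / 4)).isPreconnected.eq_of_sq_eq
    (f := fun y => 1 - 2 * y * catalanGF y) (g := fun y => √(1 - 4 * y)) ?_ ?_ ?_ ?_
    (Metric.mem_ball_self (by norm_num)) ?_ hball
  · exact continuousOn_const.sub
      ((continuousOn_const.mul continuousOn_id).mul continuousOn_catalanGF)
  · fun_prop
  · intro y hy
    have hy4 : 4 * y < 1 := by linarith [le_abs_self y, mem_ball_zero_iff.mp hy, norm_eq_abs y]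
    simp only [Pi.pow_apply]
    rw [sq_sqrt (by linarith)]
    linear_combination -4 * y * catalanGF_eq_one_add_mul_sq (mem_ball_zero_iff.mp hy)
  · intro y hy
    have hy4 : 4 * y < 1 := by linarith [le_abs_self y, mem_ball_zero_iff.mp hy, norm_eq_abs y]
    exact sqrt_ne_zero'.mpr (by linarith)
  · simp

theorem catalanGF_eq_div {x : ℝ} (hx : |x| < 1 / 4) (hx0 : x ≠ 0) :
    catalanGF x = (1 - √(1 - 4 * x)) / (2 * x) := by
  rw [eq_div_iff (mul_ne_zero two_ne_zero hx0), ← one_sub_two_mul_catalanGF hx]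
  ring

theorem hasSum_catalan_mul_fib_mul_pow {x : ℝ} (hx : 4 * φ * |x| < 1) :
    HasSum (fun n => (catalan n : ℝ) * Nat.fib n * x ^ n)
      ((catalanGF (φ * x) - catalanGF (ψ * x)) / √5) := by
  have hψφ : |ψ| < φ := by
    rw [abs_of_neg goldenConj_neg]; linarith [neg_one_lt_goldenConj, one_lt_goldenRatio]
  have hφx : ‖φ * x‖ < 1 / 4 := by
    rw [norm_mul, Real.norm_of_nonneg goldenRatio_pos.le, Real.norm_eq_abs]; linarith
  have hψx : ‖ψ * x‖ < 1 / 4 := by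
    rw [norm_mul, Real.norm_eq_abs, Real.norm_eq_abs]
    nlinarith [abs_nonneg x]
  refine (((hasSum_catalanGF hφx).sub (hasSum_catalanGF hψx)).div_const √5).congr_fun fun n => ?_
  rw [coe_fib_eq, mul_pow, mul_pow]
  ring

theorem sqrt_one_sub_goldenRatio_div_two : √(1 - φ / 2) = -ψ / √2 := by
  rw [show 1 - φ / 2 = (-ψ / √2) ^ 2 by
    rw [div_pow, sq_sqrt zero_le_two, neg_sq, goldenConj_sq, ← one_sub_goldenConj]; ring]
  exact sqrt_sq (div_nonneg (neg_nonneg.mpr goldenConj_neg.le) (sqrt_nonneg 2))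

theorem sqrt_one_sub_goldenConj_div_two : √(1 - ψ / 2) = φ / √2 := by
  rw [show 1 - ψ / 2 = (φ / √2) ^ 2 by
    rw [div_pow, sq_sqrt zero_le_two, goldenRatio_sq, ← one_sub_goldenRatio]; ring]
  exact sqrt_sq (div_nonneg goldenRatio_pos.le (sqrt_nonneg 2))

theorem catalan_fib_series :
    HasSum (fun n : ℕ => (catalan n : ℝ) * (Nat.fib n : ℝ) / 8 ^ n)
      (4 * (1 - 3 / Real.sqrt 10)) := by
  have h := hasSum_catalan_mul_fib_mul_pow (x := 1 / 8) (by
    rw [abs_of_pos (by norm_num)]; linarith [goldenRatio_lt_two])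
  have hφ : |φ * (1 / 8)| < 1 / 4 := by
    rw [abs_of_pos (by positivity)]; linarith [goldenRatio_lt_two]
  have hψ : |ψ * (1 / 8)| < 1 / 4 := by
    rw [abs_of_neg (by linarith [goldenConj_neg])]; linarith [neg_one_lt_goldenConj]
  rw [catalanGF_eq_div hφ (by positivity), catalanGF_eq_div hψ (by linarith [goldenConj_neg]),
    show 1 - 4 * (φ * (1 / 8)) = 1 - φ / 2 by ring, show 1 - 4 * (ψ * (1 / 8)) = 1 - ψ / 2 by ring,
    sqrt_one_sub_goldenRatio_div_two, sqrt_one_sub_goldenConj_div_two] at h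
  convert h using 1
  · funext n
    rw [one_div_pow, div_eq_mul_one_div]
  · have h5 : √5 ^ 2 = 5 := sq_sqrt (by norm_num)
    have h10 : √10 = √2 * √5 := by rw [← sqrt_mul zero_le_two]; norm_num
    have h1p5 : 1 + √5 ≠ 0 := by positivity
    have h1m5 : 1 - √5 ≠ 0 := (sub_neg.mpr (by rw [lt_sqrt zero_le_one]; norm_num)).ne
    rw [h10]
    field_simp
    linear_combination (8 - 8 * √2 * √5) * h5
end
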